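/- With J(B) = E[(max_{b∈B} f(b) − f*)^+] as above, J is submodular: for all nonempty B ⊆ B' ⊆ Γ and any b* ∈ Γ with b* ∉ B', J(B ∪ {b*}) − J(B) ≥ J(B' ∪ {b*}) − J(B'). -/
import Mathlib


open MeasureTheory

lemma key_ineq (a c M M' : ℝ) (h : M ≤ M') :
    max (max a M' - c) 0 - max (M' - c) 0 ≤ max (max a M - c) 0 - max (M - c) 0 := by
  rcases le_total a M with h1 | h1 <;> rcases le_total a M' with h2 | h2 <;>
    simp only [max_def] <;> split_ifs <;> linarith

lemma integrable_sup' {Ω Γ : Type*} [MeasurableSpace Ω] (μ : Measure Ω)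
    (f : Γ → Ω → ℝ) (hf : ∀ b, Integrable (f b) μ) (S : Finset Γ) (hS : S.Nonempty) :
    Integrable (fun ω => S.sup' hS fun b => f b ω) μ := by
  induction hS using Finset.Nonempty.cons_induction with
  | singleton a => simp only [Finset.sup'_singleton]; exact hf a
  | cons a S ha hS ih =>
    exact ((hf a).sup ih).congr
      (Filter.Eventually.of_forall fun ω => (Finset.sup'_cons hS (fun b => f b ω)).symm)

/-- Submodularity of the expected improvement `J(B) = E[(max_{b∈B} f(b) − f*)^+]`:
for nonempty `B ⊆ B'` and `b* ∉ B'`,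
`J(B ∪ {b*}) − J(B) ≥ J(B' ∪ {b*}) − J(B')`. -/
theorem expected_improvement_submodular
    {Ω Γ : Type*} [Fintype Γ] [DecidableEq Γ] [MeasurableSpace Ω]
    (μ : Measure Ω) [IsProbabilityMeasure μ]
    (f : Γ → Ω → ℝ) (hf : ∀ b, Integrable (f b) μ)
    (fstar : ℝ) (B B' : Finset Γ) (hB : B.Nonempty) (hBB' : B ⊆ B')
    (bstar : Γ) (hbstar : bstar ∉ B') :
    (∫ ω, max ((insert bstar B').sup' (Finset.insert_nonempty _ _) (fun b => f b ω) - fstar) 0 ∂μ)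
      - ∫ ω, max (B'.sup' (hB.mono hBB') (fun b => f b ω) - fstar) 0 ∂μ
    ≤ (∫ ω, max ((insert bstar B).sup' (Finset.insert_nonempty _ _) (fun b => f b ω) - fstar) 0 ∂μ)
      - ∫ ω, max (B.sup' hB (fun b => f b ω) - fstar) 0 ∂μ := by
  have hint : ∀ (S : Finset Γ) (hS : S.Nonempty),
      Integrable (fun ω => max (S.sup' hS (fun b => f b ω) - fstar) 0) μ := fun S hS =>
    ((integrable_sup' μ f hf S hS).sub (integrable_const fstar)).sup (integrable_const 0)
  rw [← integral_sub (hint _ _) (hint _ _), ← integral_sub (hint _ _) (hint _ _)]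
  refine integral_mono ((hint _ _).sub (hint _ _)) ((hint _ _).sub (hint _ _)) (fun ω => ?_)
  rw [Finset.sup'_insert, Finset.sup'_insert]
  exact key_ineq (f bstar ω) fstar _ _ (Finset.sup'_mono _ hBB' hB)
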